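/- arXiv:1702.07201 — 2 statements merged into one kernel-verified Lean document; each statement's English description precedes it below -/
import Mathlib

section
/- (Almost orthogonality on ℝ.) Suppose ψ and φ are C¹ functions on ℝ satisfying, for some C₀ > 0 and all u ∈ ℝ: ∫_ℝ ψ(u) du = 0 and ∫_ℝ φ(u) du = 0, |ψ(u)|, |φ(u)| ≤ C₀ (1 + |u|)^{−3}, and |ψ'(u)|, |φ'(u)| ≤ C₀ (1 + |u|)^{−3}. Then there is a constant C > 0 such that for all k, k' ∈ ℤ and all t ∈ ℝ, |(ψ_k ∗ φ_{k'})(t)| ≤ C · 2^{−|k−k'|} · 2^{−(k∧k')} / (2^{−(k∧k')} + |t|)², where ψ_k(u) := 2^k ψ(2^k u), φ_{k'}(u) := 2^{k'} φ(2^{k'} u), ∗ is the usual convolution on ℝ, and k∧k' = min(k,k'). -/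
/-!
Rescaling reduces the estimate to the case where `ψ` lives at scale `1` and `φ` at a finer
scale `1/r`, `r = 2^{|k - k'|}`. Since `φ_r := r φ(r ·)` has mean zero,
`(ψ ∗ φ_r)(s) = ∫ (ψ(s - w) - ψ(s)) φ_r(w) dw`. Where `|w| ≤ (1 + |s|)/2`, the mean value theorem
and the decay of `ψ'` bound the difference by `|w| (1 + |s|)^{-3}`, and `|w| |φ_r(w)|` integrates
to `O(1/r)`. Elsewhere `|φ_r(w)| = O(r^{-2} (1 + |s|)^{-3})` controls the `ψ(s - w)` term and
`|ψ(s)| = O((1 + |s|)^{-3})` the `ψ(s)` term. Altogether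
`|(ψ ∗ φ_r)(s)| ≤ 36 C₀² r⁻¹ (1 + |s|)^{-2}`.
-/

open MeasureTheory

/-- Convolution on `ℝ`: `(f ∗ h)(t) = ∫ f(u) h(t − u) du`. -/
noncomputable def convR (f h : ℝ → ℝ) (t : ℝ) : ℝ := ∫ u, f u * h (t - u)

open Set Filter Topology

lemma integrable_inv_one_add_abs_pow {n : ℕ} (hn : 2 ≤ n) :
    Integrable fun u : ℝ => ((1 + |u|) ^ n)⁻¹ := by
  have := integrable_one_add_norm (E := ℝ) (μ := volume) (r := n) (by simp; exact_mod_cast hn)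
  refine this.congr (Eventually.of_forall fun u => ?_)
  simp [Real.rpow_neg (by positivity : (0:ℝ) ≤ 1 + |u|)]

lemma integral_inv_one_add_abs_sq : ∫ u : ℝ, ((1 + |u|) ^ 2)⁻¹ = 2 := by
  have hderiv : ∀ x ∈ Ici (0 : ℝ), HasDerivAt (fun x => -(1 + x)⁻¹) ((1 + x) ^ 2)⁻¹ x := by
    intro x hx
    have h1 : 1 + x ≠ 0 := (by linarith [mem_Ici.mp hx] : (0 : ℝ) < 1 + x).ne'
    exact (((hasDerivAt_id x).const_add 1).inv h1).neg.congr_deriv (by simp [neg_div])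
  have hlim : Tendsto (fun x : ℝ => -(1 + x)⁻¹) atTop (𝓝 0) := by
    simpa using (tendsto_inv_atTop_zero.comp
      (tendsto_atTop_add_const_left atTop (1 : ℝ) tendsto_id)).neg
  have hint : IntegrableOn (fun x : ℝ => ((1 + x) ^ 2)⁻¹) (Ioi 0) :=
    (integrable_inv_one_add_abs_pow le_rfl).integrableOn.congr_fun
      (fun x hx => by simp [abs_of_pos (show (0:ℝ) < x from hx)]) measurableSet_Ioi
  rw [integral_comp_abs (f := fun x => ((1 + x) ^ 2)⁻¹),
    integral_Ioi_of_hasDerivAt_of_tendsto' hderiv hint hlim]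
  norm_num

lemma integrable_inv_one_add_mul_abs_sq {r : ℝ} (hr : 0 < r) :
    Integrable fun w : ℝ => ((1 + r * |w|) ^ 2)⁻¹ := by
  simpa [abs_mul, abs_of_pos hr] using
    (integrable_inv_one_add_abs_pow le_rfl).comp_mul_left' hr.ne'

lemma integral_inv_one_add_mul_abs_sq {r : ℝ} (hr : 0 < r) :
    ∫ w : ℝ, ((1 + r * |w|) ^ 2)⁻¹ = 2 / r := by
  have := Measure.integral_comp_mul_left (fun u : ℝ => ((1 + |u|) ^ 2)⁻¹) r
  simp only [abs_mul, abs_of_pos hr, integral_inv_one_add_abs_sq, abs_inv] at this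
  rw [this, smul_eq_mul, inv_mul_eq_div]

lemma nonneg_of_abs_le_decay {f : ℝ → ℝ} {C₀ : ℝ} (h : ∀ u, |f u| ≤ C₀ / (1 + |u|) ^ 3) :
    0 ≤ C₀ := by
  simpa using (abs_nonneg _).trans (h 0)

lemma integrable_of_abs_le_decay {f : ℝ → ℝ} {C₀ : ℝ} (hf : Continuous f)
    (h : ∀ u, |f u| ≤ C₀ / (1 + |u|) ^ 3) : Integrable f :=
  ((integrable_inv_one_add_abs_pow (n := 3) (by norm_num)).const_mul C₀).mono'
    hf.aestronglyMeasurable (Eventually.of_forall fun u => by simpa [div_eq_mul_inv] using h u)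

lemma integral_abs_le_of_decay {f : ℝ → ℝ} {C₀ : ℝ} (h : ∀ u, |f u| ≤ C₀ / (1 + |u|) ^ 3) :
    ∫ u, |f u| ≤ 2 * C₀ := by
  have hC₀ := nonneg_of_abs_le_decay h
  calc ∫ u, |f u| ≤ ∫ u : ℝ, C₀ * ((1 + |u|) ^ 2)⁻¹ := by
        refine integral_mono_of_nonneg (Eventually.of_forall fun u => abs_nonneg _)
          ((integrable_inv_one_add_abs_pow le_rfl).const_mul C₀) (Eventually.of_forall fun u => ?_)
        dsimp only
        rw [← div_eq_mul_inv]
        refine (h u).trans (div_le_div_of_nonneg_left hC₀ (by positivity) ?_)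
        exact pow_le_pow_right₀ (by simp) (by norm_num)
    _ = 2 * C₀ := by rw [integral_const_mul, integral_inv_one_add_abs_sq, mul_comm]

lemma abs_dilate_le {g : ℝ → ℝ} {C₀ : ℝ} (h : ∀ u, |g u| ≤ C₀ / (1 + |u|) ^ 3) {r : ℝ}
    (hr : 0 < r) (w : ℝ) : |r * g (r * w)| ≤ r * C₀ / (1 + r * |w|) ^ 3 := by
  rw [abs_mul, abs_of_pos hr, mul_div_assoc]
  simpa [abs_mul, abs_of_pos hr] using mul_le_mul_of_nonneg_left (h (r * w)) hr.le

lemma abs_sub_le_of_abs_deriv_le_decay {f : ℝ → ℝ} {C₀ : ℝ} (hf : Differentiable ℝ f)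
    (hf1 : ∀ u, |deriv f u| ≤ C₀ / (1 + |u|) ^ 3) {s w : ℝ} (hw : 2 * |w| ≤ 1 + |s|) :
    |f (s - w) - f s| ≤ 8 * C₀ / (1 + |s|) ^ 3 * |w| := by
  have hC₀ := nonneg_of_abs_le_decay hf1
  have hderiv : ∀ x ∈ Metric.closedBall s |w|, ‖deriv f x‖ ≤ 8 * C₀ / (1 + |s|) ^ 3 := by
    intro x hx
    rw [Metric.mem_closedBall, Real.dist_eq] at hx
    have hx' : 1 + |s| ≤ 2 * (1 + |x|) := by
      have := abs_sub_abs_le_abs_sub s x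
      rw [abs_sub_comm] at this
      linarith
    refine (hf1 x).trans ?_
    rw [div_le_div_iff₀ (by positivity) (by positivity)]
    have : (1 + |s|) ^ 3 ≤ 8 * (1 + |x|) ^ 3 := by
      calc (1 + |s|) ^ 3 ≤ (2 * (1 + |x|)) ^ 3 := by gcongr
        _ = 8 * (1 + |x|) ^ 3 := by ring
    nlinarith
  have := (convex_closedBall s |w|).norm_image_sub_le_of_norm_deriv_le (fun x _ => hf x) hderiv
    (Metric.mem_closedBall_self (abs_nonneg w))
    (by simp : s - w ∈ Metric.closedBall s |w|)
  simpa [Real.norm_eq_abs, abs_sub_comm] using this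

lemma abs_sub_mul_dilate_le_of_near {f g : ℝ → ℝ} {C₀ : ℝ} (hf : Differentiable ℝ f)
    (hg0 : ∀ u, |g u| ≤ C₀ / (1 + |u|) ^ 3) (hf1 : ∀ u, |deriv f u| ≤ C₀ / (1 + |u|) ^ 3)
    {r : ℝ} (hr : 0 < r) {s w : ℝ} (hw : 2 * |w| ≤ 1 + |s|) :
    |(f (s - w) - f s) * (r * g (r * w))| ≤
      C₀ / (1 + |s|) ^ 2 * (8 * C₀ / (1 + r * |w|) ^ 2) := by
  have hC₀ := nonneg_of_abs_le_decay hg0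
  have hcube : r * |w| / (1 + r * |w|) ^ 3 ≤ 1 / (1 + r * |w|) ^ 2 := by
    rw [div_le_div_iff₀ (by positivity) (by positivity)]
    nlinarith [pow_pos (by positivity : 0 < 1 + r * |w|) 2]
  rw [abs_mul]
  calc |f (s - w) - f s| * |r * g (r * w)|
      ≤ 8 * C₀ / (1 + |s|) ^ 3 * |w| * (r * C₀ / (1 + r * |w|) ^ 3) := by
        gcongr
        exacts [abs_sub_le_of_abs_deriv_le_decay hf hf1 hw, abs_dilate_le hg0 hr w]
    _ = 8 * C₀ ^ 2 / (1 + |s|) ^ 3 * (r * |w| / (1 + r * |w|) ^ 3) := by ring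
    _ ≤ 8 * C₀ ^ 2 / (1 + |s|) ^ 2 * (1 / (1 + r * |w|) ^ 2) := by
        gcongr
        · simp
        · norm_num
    _ = C₀ / (1 + |s|) ^ 2 * (8 * C₀ / (1 + r * |w|) ^ 2) := by ring

lemma abs_sub_mul_dilate_le_of_far {f g : ℝ → ℝ} {C₀ : ℝ}
    (hf0 : ∀ u, |f u| ≤ C₀ / (1 + |u|) ^ 3) (hg0 : ∀ u, |g u| ≤ C₀ / (1 + |u|) ^ 3)
    {r : ℝ} (hr : 1 ≤ r) {s w : ℝ} (hw : 1 + |s| < 2 * |w|) :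
    |(f (s - w) - f s) * (r * g (r * w))| ≤
      C₀ / (1 + |s|) ^ 2 * (2 * C₀ / (1 + r * |w|) ^ 2 + 8 / r * |f (s - w)|) := by
  have hC₀ := nonneg_of_abs_le_decay hf0
  have hr0 : 0 < r := by linarith
  have hS : 1 ≤ 1 + |s| := by simp
  have hrS : r * (1 + |s|) ≤ 2 * (1 + r * |w|) := by nlinarith
  have hg_far : r * C₀ / (1 + r * |w|) ^ 3 ≤ C₀ / (1 + |s|) ^ 2 * (8 / r) := by
    calc r * C₀ / (1 + r * |w|) ^ 3 ≤ r * C₀ / (r * (1 + |s|) / 2) ^ 3 := by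
          gcongr
          linarith
      _ = C₀ / (1 + |s|) ^ 2 * (8 / (r * (r * (1 + |s|)))) := by field_simp; ring
      _ ≤ C₀ / (1 + |s|) ^ 2 * (8 / r) := by
          gcongr
          exact le_mul_of_one_le_right hr0.le (one_le_mul_of_one_le_of_one_le hr hS)
  have hg_decay : r * C₀ / (1 + r * |w|) ^ 3 ≤ 2 / (1 + |s|) * (C₀ / (1 + r * |w|) ^ 2) := by
    calc r * C₀ / (1 + r * |w|) ^ 3 = r / (1 + r * |w|) * (C₀ / (1 + r * |w|) ^ 2) := by
          field_simp
      _ ≤ 2 / (1 + |s|) * (C₀ / (1 + r * |w|) ^ 2) := by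
          refine mul_le_mul_of_nonneg_right ?_ (by positivity)
          rw [div_le_div_iff₀ (by positivity) (by positivity)]
          linarith
  rw [abs_mul]
  calc |f (s - w) - f s| * |r * g (r * w)|
      ≤ (|f (s - w)| + |f s|) * (r * C₀ / (1 + r * |w|) ^ 3) := by
        gcongr
        exacts [abs_sub _ _, abs_dilate_le hg0 hr0 w]
    _ = |f (s - w)| * (r * C₀ / (1 + r * |w|) ^ 3) + |f s| * (r * C₀ / (1 + r * |w|) ^ 3) := by
        ring
    _ ≤ |f (s - w)| * (C₀ / (1 + |s|) ^ 2 * (8 / r))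
        + C₀ / (1 + |s|) ^ 3 * (2 / (1 + |s|) * (C₀ / (1 + r * |w|) ^ 2)) := by
        gcongr
        exact hf0 s
    _ = C₀ / (1 + |s|) ^ 2 *
          (2 * C₀ / (1 + r * |w|) ^ 2 / (1 + |s|) ^ 2 + 8 / r * |f (s - w)|) := by
        field_simp
        ring
    _ ≤ C₀ / (1 + |s|) ^ 2 * (2 * C₀ / (1 + r * |w|) ^ 2 + 8 / r * |f (s - w)|) := by
        refine mul_le_mul_of_nonneg_left (add_le_add_left ?_ _) (by positivity)
        exact div_le_self (by positivity) (one_le_pow₀ hS)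

lemma abs_sub_mul_dilate_le {f g : ℝ → ℝ} {C₀ : ℝ} (hf : Differentiable ℝ f)
    (hf0 : ∀ u, |f u| ≤ C₀ / (1 + |u|) ^ 3) (hg0 : ∀ u, |g u| ≤ C₀ / (1 + |u|) ^ 3)
    (hf1 : ∀ u, |deriv f u| ≤ C₀ / (1 + |u|) ^ 3) {r : ℝ} (hr : 1 ≤ r) (s w : ℝ) :
    |(f (s - w) - f s) * (r * g (r * w))| ≤
      C₀ / (1 + |s|) ^ 2 * (10 * C₀ / (1 + r * |w|) ^ 2 + 8 / r * |f (s - w)|) := by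
  have hC₀ := nonneg_of_abs_le_decay hf0
  have hf_term : 0 ≤ 8 / r * |f (s - w)| := by positivity
  rcases le_or_gt (2 * |w|) (1 + |s|) with hw | hw
  · refine (abs_sub_mul_dilate_le_of_near hf hg0 hf1 (by linarith) hw).trans ?_
    gcongr
    refine le_add_of_le_of_nonneg ?_ hf_term
    gcongr
    norm_num
  · refine (abs_sub_mul_dilate_le_of_far hf0 hg0 hr hw).trans ?_
    gcongr
    norm_num

theorem abs_integral_mul_dilate_le {f g : ℝ → ℝ} {C₀ : ℝ} (hf : ContDiff ℝ 1 f)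
    (hg : Continuous g) (hg_int : ∫ u, g u = 0)
    (hf0 : ∀ u, |f u| ≤ C₀ / (1 + |u|) ^ 3) (hg0 : ∀ u, |g u| ≤ C₀ / (1 + |u|) ^ 3)
    (hf1 : ∀ u, |deriv f u| ≤ C₀ / (1 + |u|) ^ 3) {r : ℝ} (hr : 1 ≤ r) (s : ℝ) :
    |∫ w, f (s - w) * (r * g (r * w))| ≤ 36 * C₀ ^ 2 / r / (1 + |s|) ^ 2 := by
  have hC₀ := nonneg_of_abs_le_decay hf0
  have hr0 : 0 < r := by linarith
  have hgr : Integrable fun w => r * g (r * w) :=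
    ((integrable_of_abs_le_decay hg hg0).comp_mul_left' hr0.ne').const_mul r
  have hgr_zero : ∫ w, r * g (r * w) = 0 := by
    simp [integral_const_mul, Measure.integral_comp_mul_left (fun u => g u), hg_int]
  have hf_bdd : ∀ u, ‖f u‖ ≤ C₀ := fun u =>
    (hf0 u).trans (div_le_self hC₀ (one_le_pow₀ (by simp)))
  have hprod : Integrable fun w => f (s - w) * (r * g (r * w)) :=
    hgr.bdd_mul (hf.continuous.comp (continuous_sub_left s)).aestronglyMeasurable
      (Eventually.of_forall fun w => hf_bdd _)
  have hcancel :
      ∫ w, f (s - w) * (r * g (r * w)) = ∫ w, (f (s - w) - f s) * (r * g (r * w)) := by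
    simp_rw [sub_mul]
    rw [integral_sub hprod (hgr.const_mul _), integral_const_mul, hgr_zero, mul_zero, sub_zero]
  have hf_shift : ∫ w, |f (s - w)| ≤ 2 * C₀ := by
    rw [integral_sub_left_eq_self (fun u => |f u|)]
    exact integral_abs_le_of_decay hf0
  have hsq := integrable_inv_one_add_mul_abs_sq hr0
  have hfs : Integrable fun w => |f (s - w)| :=
    ((integrable_of_abs_le_decay hf.continuous hf0).comp_sub_left s).abs
  rw [hcancel]
  calc |∫ w, (f (s - w) - f s) * (r * g (r * w))|
      ≤ ∫ w, C₀ / (1 + |s|) ^ 2 * (10 * C₀ * ((1 + r * |w|) ^ 2)⁻¹ + 8 / r * |f (s - w)|) := by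
        rw [← Real.norm_eq_abs]
        refine norm_integral_le_of_norm_le (((hsq.const_mul _).add (hfs.const_mul _)).const_mul _)
          (Eventually.of_forall fun w => ?_)
        simpa [div_eq_mul_inv] using
          abs_sub_mul_dilate_le (hf.differentiable one_ne_zero) hf0 hg0 hf1 hr s w
    _ = C₀ / (1 + |s|) ^ 2 * (10 * C₀ * (2 / r) + 8 / r * ∫ w, |f (s - w)|) := by
        rw [integral_const_mul, integral_add (hsq.const_mul _) (hfs.const_mul _),
          integral_const_mul, integral_const_mul, integral_inv_one_add_mul_abs_sq hr0]
    _ ≤ C₀ / (1 + |s|) ^ 2 * (10 * C₀ * (2 / r) + 8 / r * (2 * C₀)) := by gcongr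
    _ = 36 * C₀ ^ 2 / r / (1 + |s|) ^ 2 := by ring

lemma convR_comm (f h : ℝ → ℝ) : convR f h = convR h f := by
  ext t
  rw [convR, convR, ← integral_sub_left_eq_self _ volume t]
  simp [mul_comm]

lemma convR_dilate_eq (f g : ℝ → ℝ) {a : ℝ} (ha : 0 < a) (b t : ℝ) :
    convR (fun u => a * f (a * u)) (fun u => b * g (b * u)) t =
      a * ∫ w, f (a * t - w) * (b / a * g (b / a * w)) := by
  set F : ℝ → ℝ := fun w => f (a * t - w) * (b / a * g (b / a * w))
  calc convR (fun u => a * f (a * u)) (fun u => b * g (b * u)) t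
      = ∫ u, a ^ 2 * F (a * u) := by
        rw [convR_comm, convR]
        congr 1
        ext u
        simp only [F]
        rw [show a * t - a * u = a * (t - u) by ring, show b / a * (a * u) = b * u by field_simp]
        field_simp
    _ = a * ∫ w, F w := by
        rw [integral_const_mul, Measure.integral_comp_mul_left F a, abs_of_pos (inv_pos.2 ha),
          smul_eq_mul]
        field_simp

lemma two_zpow_neg_natAbs_sub (k k' : ℤ) :
    (2 : ℝ) ^ (-((k - k').natAbs : ℤ)) = 2 ^ min k k' / 2 ^ max k k' := by
  rw [← zpow_sub₀ two_ne_zero]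
  congr 1
  omega

theorem abs_convR_dilate_le {f g : ℝ → ℝ} {C₀ : ℝ} (hf : ContDiff ℝ 1 f)
    (hg : Continuous g) (hg_int : ∫ u, g u = 0)
    (hf0 : ∀ u, |f u| ≤ C₀ / (1 + |u|) ^ 3) (hg0 : ∀ u, |g u| ≤ C₀ / (1 + |u|) ^ 3)
    (hf1 : ∀ u, |deriv f u| ≤ C₀ / (1 + |u|) ^ 3) {a b : ℝ} (ha : 0 < a) (hab : a ≤ b)
    (t : ℝ) :
    |convR (fun u => a * f (a * u)) (fun u => b * g (b * u)) t| ≤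
      36 * C₀ ^ 2 * (a / b) * (a⁻¹ / (a⁻¹ + |t|) ^ 2) := by
  have hr : 1 ≤ b / a := (one_le_div ha).2 hab
  rw [convR_dilate_eq f g ha, abs_mul, abs_of_pos ha]
  calc a * |∫ w, f (a * t - w) * (b / a * g (b / a * w))|
      ≤ a * (36 * C₀ ^ 2 / (b / a) / (1 + |a * t|) ^ 2) := by
        gcongr
        exact abs_integral_mul_dilate_le hf hg hg_int hf0 hg0 hf1 hr (a * t)
    _ = 36 * C₀ ^ 2 * (a / b) * (a⁻¹ / (a⁻¹ + |t|) ^ 2) := by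
        rw [abs_mul, abs_of_pos ha]
        field_simp

theorem stmt7 (ψ φ : ℝ → ℝ) (C₀ : ℝ) (hC₀ : 0 < C₀)
    (hψsm : ContDiff ℝ 1 ψ) (hφsm : ContDiff ℝ 1 φ)
    (hψint : (∫ u, ψ u) = 0) (hφint : (∫ u, φ u) = 0)
    (hψ0 : ∀ u : ℝ, |ψ u| ≤ C₀ / (1 + |u|) ^ 3)
    (hφ0 : ∀ u : ℝ, |φ u| ≤ C₀ / (1 + |u|) ^ 3)
    (hψ1 : ∀ u : ℝ, |deriv ψ u| ≤ C₀ / (1 + |u|) ^ 3)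
    (hφ1 : ∀ u : ℝ, |deriv φ u| ≤ C₀ / (1 + |u|) ^ 3) :
    ∃ C : ℝ, 0 < C ∧ ∀ (k k' : ℤ) (t : ℝ),
      |convR (fun u => (2 : ℝ) ^ k * ψ ((2 : ℝ) ^ k * u))
          (fun u => (2 : ℝ) ^ k' * φ ((2 : ℝ) ^ k' * u)) t| ≤
        C * (2 : ℝ) ^ (-((k - k').natAbs : ℤ)) *
          ((2 : ℝ) ^ (-(min k k')) / ((2 : ℝ) ^ (-(min k k')) + |t|) ^ 2) := by
  refine ⟨36 * C₀ ^ 2, by positivity, fun k k' t => ?_⟩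
  rw [two_zpow_neg_natAbs_sub, zpow_neg]
  rcases le_total k k' with h | h
  · rw [min_eq_left h, max_eq_right h]
    exact abs_convR_dilate_le hψsm hφsm.continuous hφint hψ0 hφ0 hψ1 (zpow_pos two_pos k)
      (zpow_le_zpow_right₀ one_le_two h) t
  · rw [convR_comm, min_eq_right h, max_eq_left h]
    exact abs_convR_dilate_le hφsm hψsm.continuous hψint hφ0 hψ0 hφ1 (zpow_pos two_pos k')
      (zpow_le_zpow_right₀ one_le_two h) t
end

section
/- For every integer n ≥ 1 there is a constant C > 0 such that for all real numbers A, B > 0 with B ≤ A², all z ∈ ℝ^{2n} and all t ∈ ℝ: ∫_ℝ [A / (A² + |z|² + |t−u|)^{n + 3/2}] · [B / (B + |u|)²] du ≤ C · [A^{1/2} / (A + |z|)^{2n + 1/2}] · [A^{1/2} / (A + |t|^{1/2})^{5/2}]. -/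
/-! Split the line according to whether `|u| ≤ |t|/2`. There `|t - u| ≥ |t|/2`, so the first
factor is at most `A / (A² + |z|² + |t|/2)^(n+3/2)` while the second integrates to `2`; elsewhere
the second factor is at most `B / (B + |t|/2)²` while the first integrates to
`2A (A² + |z|²)^(-(n+1/2)) / (n+1/2)`. For `|t| ≤ A²` it suffices to bound the first factor by its
value at `u = t`. Both bounds are compared with the right-hand side through
`(x + y)² ≤ 2(x² + y²)`, and, for the far term, through `B ≤ A² ≤ A^(1/2) |t|^(3/4)`. -/

open MeasureTheory Set Real

lemma integrable_add_abs_rpow_neg {c p : ℝ} (hc : 0 < c) (hp : 1 < p) :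
    Integrable fun u : ℝ => (c + |u|) ^ (-p) := by
  have h : Integrable fun u : ℝ => c ^ (-p) * (1 + ‖u / c‖) ^ (-p) :=
    ((integrable_one_add_norm (by simpa using hp)).comp_div hc.ne').const_mul _
  refine h.congr (Filter.Eventually.of_forall fun u => ?_)
  simp only [norm_div, Real.norm_eq_abs, abs_of_pos hc]
  rw [← mul_rpow hc.le (by positivity), mul_add, mul_one, mul_div_cancel₀ _ hc.ne']

lemma integral_add_abs_rpow_neg {c p : ℝ} (hc : 0 < c) (hp : 1 < p) :
    ∫ u : ℝ, (c + |u|) ^ (-p) = 2 * c ^ (1 - p) / (p - 1) := by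
  have hshift : ∫ x in Ioi (0 : ℝ), (c + x) ^ (-p) = ∫ y in Ioi c, y ^ (-p) := by
    simpa using (measurePreserving_add_left volume c).setIntegral_preimage_emb
      (measurableEmbedding_addLeft c) (fun y => y ^ (-p)) (Ioi c)
  rw [integral_comp_abs (f := fun x => (c + x) ^ (-p)), hshift,
    integral_Ioi_rpow_of_lt (by linarith) hc, show -p + 1 = 1 - p by ring,
    show 1 - p = -(p - 1) by ring, neg_div, div_neg, neg_neg]
  ring

section

variable {c p : ℝ} (A t : ℝ)

lemma div_add_abs_sub_rpow_eq (hc : 0 < c) :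
    (fun u : ℝ => A / (c + |t - u|) ^ p) = fun u => A * (fun v => (c + |v|) ^ (-p)) (t - u) := by
  ext u
  rw [div_eq_mul_inv, ← rpow_neg (by positivity)]

lemma integrable_div_add_abs_sub_rpow (hc : 0 < c) (hp : 1 < p) :
    Integrable fun u : ℝ => A / (c + |t - u|) ^ p := by
  rw [div_add_abs_sub_rpow_eq A t hc]
  exact ((integrable_add_abs_rpow_neg hc hp).comp_sub_left t).const_mul A

lemma integral_div_add_abs_sub_rpow (hc : 0 < c) (hp : 1 < p) :
    ∫ u : ℝ, A / (c + |t - u|) ^ p = 2 * A * c ^ (1 - p) / (p - 1) := by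
  rw [div_add_abs_sub_rpow_eq A t hc, integral_const_mul,
    integral_sub_left_eq_self (fun v => (c + |v|) ^ (-p)), integral_add_abs_rpow_neg hc hp]
  ring

end

lemma div_add_abs_sq_eq (B : ℝ) :
    (fun u : ℝ => B / (B + |u|) ^ 2) = fun u => B / (B + |0 - u|) ^ (2 : ℝ) := by
  simp

lemma integral_div_add_abs_sq {B : ℝ} (hB : 0 < B) : ∫ u : ℝ, B / (B + |u|) ^ 2 = 2 := by
  rw [div_add_abs_sq_eq, integral_div_add_abs_sub_rpow B 0 hB one_lt_two]
  norm_num [rpow_neg_one, hB.ne']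

lemma integrable_div_add_abs_sq {B : ℝ} (hB : 0 < B) :
    Integrable fun u : ℝ => B / (B + |u|) ^ 2 :=
  div_add_abs_sq_eq B ▸ integrable_div_add_abs_sub_rpow B 0 hB one_lt_two

lemma integral_mul_le_of_le_on {α : Type*} [MeasurableSpace α] {μ : Measure α}
    {f g : α → ℝ} (S : Set α) {M N : ℝ} (hf : Integrable f μ) (hg : Integrable g μ)
    (hf0 : ∀ x, 0 ≤ f x) (hg0 : ∀ x, 0 ≤ g x) (hM : 0 ≤ M) (hN : 0 ≤ N)
    (hfS : ∀ x ∈ S, f x ≤ M) (hgS : ∀ x ∉ S, g x ≤ N) :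
    ∫ x, f x * g x ∂μ ≤ M * ∫ x, g x ∂μ + N * ∫ x, f x ∂μ := by
  have hpt : ∀ x, f x * g x ≤ M * g x + N * f x := by
    intro x
    by_cases hx : x ∈ S
    · nlinarith [mul_le_mul_of_nonneg_right (hfS x hx) (hg0 x), mul_nonneg hN (hf0 x)]
    · nlinarith [mul_le_mul_of_nonneg_left (hgS x hx) (hf0 x), mul_nonneg hM (hg0 x)]
  rw [← integral_const_mul, ← integral_const_mul,
    ← integral_add (hg.const_mul M) (hf.const_mul N)]
  exact integral_mono_of_nonneg (Filter.Eventually.of_forall fun x => mul_nonneg (hf0 x) (hg0 x))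
    ((hg.const_mul M).add (hf.const_mul N)) (Filter.Eventually.of_forall hpt)

section

variable {A B D a : ℝ} (t : ℝ)

lemma integral_decay_mul_decay_le (hA : 0 ≤ A) (hB : 0 < B) (hD : 0 < D) (ha : 1 < a) :
    ∫ u : ℝ, A / (D + |t - u|) ^ a * (B / (B + |u|) ^ 2) ≤ 2 * (A / D ^ a) := by
  have h := integral_mul_le_of_le_on univ (integrable_div_add_abs_sub_rpow A t hD ha)
    (integrable_div_add_abs_sq hB) (fun u => by positivity) (fun u => by positivity)
    (M := A / D ^ a) (by positivity) le_rfl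
    (fun u _ => by gcongr; exact le_add_of_nonneg_right (abs_nonneg _)) (by simp)
  rw [integral_div_add_abs_sq hB, zero_mul, add_zero] at h
  linarith

lemma integral_decay_mul_decay_le_split (hA : 0 ≤ A) (hB : 0 < B) (hD : 0 < D) (ha : 1 < a) :
    ∫ u : ℝ, A / (D + |t - u|) ^ a * (B / (B + |u|) ^ 2) ≤
      2 * (A / (D + |t| / 2) ^ a) + B / (B + |t| / 2) ^ 2 * (2 * A * D ^ (1 - a) / (a - 1)) := by
  have h := integral_mul_le_of_le_on {u | |u| ≤ |t| / 2}
    (integrable_div_add_abs_sub_rpow A t hD ha) (integrable_div_add_abs_sq hB)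
    (M := A / (D + |t| / 2) ^ a) (N := B / (B + |t| / 2) ^ 2)
    (fun u => by positivity) (fun u => by positivity) (by positivity) (by positivity)
    (fun u hu => by gcongr; linarith [abs_sub_abs_le_abs_sub t u, show |u| ≤ |t| / 2 from hu])
    (fun u hu => by gcongr; exact (not_le.mp hu).le)
  rw [integral_div_add_abs_sq hB, integral_div_add_abs_sub_rpow A t hD ha] at h
  linarith

end

lemma add_rpow_two_mul_le {x y Z r : ℝ} (hx : 0 ≤ x) (hy : 0 ≤ y) (hr : 0 ≤ r)
    (hZ : 2 * (x ^ 2 + y ^ 2) ≤ Z) : (x + y) ^ (2 * r) ≤ Z ^ r := by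
  rw [rpow_mul (by positivity), rpow_two]
  exact rpow_le_rpow (by positivity) (add_sq_le.trans hZ) hr

section

variable {A ρ σ m : ℝ}

lemma add_rpow_mul_add_rpow_le {E : ℝ} (hA : 0 ≤ A) (hρ : 0 ≤ ρ) (hσ : 0 ≤ σ) (hm : 0 ≤ m)
    (hE : A ^ 2 + ρ ^ 2 + σ ^ 2 ≤ 2 * E) :
    (A + ρ) ^ (2 * m + 1 / 2) * (A + σ) ^ ((5 : ℝ) / 2) ≤ 4 ^ (m + 3 / 2) * E ^ (m + 3 / 2) := by
  have hE0 : 0 ≤ 4 * E := by nlinarith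
  have hρE : (A + ρ) ^ (2 * (m + 1 / 4)) ≤ (4 * E) ^ (m + 1 / 4) :=
    add_rpow_two_mul_le hA hρ (by positivity) (by nlinarith)
  have hσE : (A + σ) ^ (2 * (5 / 4 : ℝ)) ≤ (4 * E) ^ (5 / 4 : ℝ) :=
    add_rpow_two_mul_le hA hσ (by positivity) (by nlinarith)
  calc (A + ρ) ^ (2 * m + 1 / 2) * (A + σ) ^ ((5 : ℝ) / 2)
      = (A + ρ) ^ (2 * (m + 1 / 4)) * (A + σ) ^ (2 * (5 / 4 : ℝ)) := by ring_nf
    _ ≤ (4 * E) ^ (m + 1 / 4) * (4 * E) ^ (5 / 4 : ℝ) := by gcongr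
    _ = 4 ^ (m + 3 / 2) * E ^ (m + 3 / 2) := by
      rw [← rpow_add' hE0 (by linarith), mul_rpow (by norm_num) (by linarith)]
      ring_nf

lemma sq_mul_add_rpow_mul_add_rpow_le (hA : 0 ≤ A) (hρ : 0 ≤ ρ) (hAσ : A ≤ σ) (hm : 0 ≤ m) :
    A ^ 2 * ((A + ρ) ^ (2 * m + 1 / 2) * (A + σ) ^ ((5 : ℝ) / 2)) ≤
      2 ^ ((5 : ℝ) / 2) * (2 * (A ^ 2 + ρ ^ 2)) ^ (m + 1 / 2) * σ ^ 4 := by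
  have hσ : 0 ≤ σ := hA.trans hAσ
  have hA2 : A ^ 2 ≤ A ^ (1 / 2 : ℝ) * σ ^ (3 / 2 : ℝ) := by
    calc A ^ 2 = A ^ (1 / 2 : ℝ) * A ^ (3 / 2 : ℝ) := by
          rw [← rpow_add' hA (by norm_num)]; norm_num
      _ ≤ A ^ (1 / 2 : ℝ) * σ ^ (3 / 2 : ℝ) := by gcongr
  have hAρ : A ^ (1 / 2 : ℝ) * (A + ρ) ^ (2 * m + 1 / 2) ≤ (2 * (A ^ 2 + ρ ^ 2)) ^ (m + 1 / 2) :=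
    calc A ^ (1 / 2 : ℝ) * (A + ρ) ^ (2 * m + 1 / 2)
        ≤ (A + ρ) ^ (1 / 2 : ℝ) * (A + ρ) ^ (2 * m + 1 / 2) := by gcongr; linarith
      _ = (A + ρ) ^ (2 * (m + 1 / 2)) := by rw [← rpow_add' (by positivity) (by linarith)]; ring_nf
      _ ≤ (2 * (A ^ 2 + ρ ^ 2)) ^ (m + 1 / 2) := add_rpow_two_mul_le hA hρ (by positivity) le_rfl
  have hAσ' : (A + σ) ^ ((5 : ℝ) / 2) ≤ 2 ^ ((5 : ℝ) / 2) * σ ^ ((5 : ℝ) / 2) := by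
    rw [← mul_rpow (by norm_num) hσ]; gcongr; linarith
  have hσ4 : σ ^ ((5 : ℝ) / 2) * σ ^ (3 / 2 : ℝ) = σ ^ 4 := by
    rw [← rpow_add' hσ (by norm_num)]; norm_num
  calc A ^ 2 * ((A + ρ) ^ (2 * m + 1 / 2) * (A + σ) ^ ((5 : ℝ) / 2))
      ≤ A ^ (1 / 2 : ℝ) * σ ^ (3 / 2 : ℝ) * ((A + ρ) ^ (2 * m + 1 / 2) * (A + σ) ^ ((5 : ℝ) / 2)) := by
        gcongr
    _ = A ^ (1 / 2 : ℝ) * (A + ρ) ^ (2 * m + 1 / 2) * (A + σ) ^ ((5 : ℝ) / 2) * σ ^ (3 / 2 : ℝ) := by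
        ring
    _ ≤ (2 * (A ^ 2 + ρ ^ 2)) ^ (m + 1 / 2) * (2 ^ ((5 : ℝ) / 2) * σ ^ ((5 : ℝ) / 2)) *
          σ ^ (3 / 2 : ℝ) := by gcongr
    _ = 2 ^ ((5 : ℝ) / 2) * (2 * (A ^ 2 + ρ ^ 2)) ^ (m + 1 / 2) * σ ^ 4 := by
        rw [← hσ4]; ring

end

lemma div_le_mul_div_of_le_mul {A P E c : ℝ} (hA : 0 ≤ A) (hP : 0 < P) (hE : 0 < E)
    (h : P ≤ c * E) : A / E ≤ c * (A / P) := by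
  rw [mul_div_assoc', le_div_iff₀ hP, div_mul_eq_mul_div, div_le_iff₀ hE]
  nlinarith

lemma far_term_le {A B ρ σ m : ℝ} (hA : 0 < A) (hB : 0 < B) (hBA : B ≤ A ^ 2) (hρ : 0 ≤ ρ)
    (hAσ : A ≤ σ) (hm : 0 ≤ m) :
    B / (B + σ ^ 2 / 2) ^ 2 * (2 * A * (A ^ 2 + ρ ^ 2) ^ (1 - (m + 3 / 2)) / (m + 3 / 2 - 1)) ≤
      8 * (2 ^ ((5 : ℝ) / 2) * 2 ^ (m + 1 / 2)) / (m + 1 / 2) *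
        (A / ((A + ρ) ^ (2 * m + 1 / 2) * (A + σ) ^ ((5 : ℝ) / 2))) := by
  set D := A ^ 2 + ρ ^ 2
  set P := (A + ρ) ^ (2 * m + 1 / 2) * (A + σ) ^ ((5 : ℝ) / 2)
  set K := (2 : ℝ) ^ ((5 : ℝ) / 2) * 2 ^ (m + 1 / 2)
  have hσ : 0 < σ := hA.trans_le hAσ
  have hD : 0 < D := by positivity
  have hP : 0 < P := by positivity
  have hweight : A ^ 2 * P ≤ K * (D ^ (m + 1 / 2) * σ ^ 4) :=
    (sq_mul_add_rpow_mul_add_rpow_le hA.le hρ hAσ hm).trans_eq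
      (by rw [mul_rpow (by norm_num) hD.le]; ring)
  have hB' : B / (B + σ ^ 2 / 2) ^ 2 ≤ 4 * A ^ 2 / σ ^ 4 :=
    calc B / (B + σ ^ 2 / 2) ^ 2 ≤ A ^ 2 / (σ ^ 2 / 2) ^ 2 := by gcongr; linarith
      _ = 4 * A ^ 2 / σ ^ 4 := by ring
  have hDexp : D ^ (1 - (m + 3 / 2)) = (D ^ (m + 1 / 2))⁻¹ := by
    rw [← rpow_neg hD.le]; ring_nf
  rw [hDexp, show m + 3 / 2 - 1 = m + 1 / 2 by ring]
  calc B / (B + σ ^ 2 / 2) ^ 2 * (2 * A * (D ^ (m + 1 / 2))⁻¹ / (m + 1 / 2))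
      ≤ 4 * A ^ 2 / σ ^ 4 * (2 * A * (D ^ (m + 1 / 2))⁻¹ / (m + 1 / 2)) :=
        mul_le_mul_of_nonneg_right hB' (by positivity)
    _ = 8 * A / (m + 1 / 2) * (A ^ 2 / (D ^ (m + 1 / 2) * σ ^ 4)) := by
        field_simp; ring
    _ ≤ 8 * A / (m + 1 / 2) * (K / P) := by
        refine mul_le_mul_of_nonneg_left ?_ (by positivity)
        rw [div_le_div_iff₀ (by positivity) hP]
        linarith
    _ = 8 * K / (m + 1 / 2) * (A / P) := by ring

lemma rpow_half_div_mul_rpow_half_div {A : ℝ} (hA : 0 ≤ A) (X Y : ℝ) :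
    A ^ ((1 : ℝ) / 2) / X * (A ^ ((1 : ℝ) / 2) / Y) = A / (X * Y) := by
  rw [div_mul_div_comm, ← rpow_add' hA (by norm_num)]
  norm_num

theorem stmt14_general (n : ℕ) :
    ∃ C : ℝ, 0 < C ∧
      ∀ A B : ℝ, 0 < A → 0 < B → B ≤ A ^ 2 →
        ∀ (z : EuclideanSpace ℝ (Fin (2 * n))) (t : ℝ),
          (∫ u : ℝ,
              (A / (A ^ 2 + ‖z‖ ^ 2 + |t - u|) ^ ((n : ℝ) + 3 / 2)) *
                (B / (B + |u|) ^ 2)) ≤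
            C * (A ^ ((1 : ℝ) / 2) / (A + ‖z‖) ^ (2 * (n : ℝ) + 1 / 2)) *
              (A ^ ((1 : ℝ) / 2) / (A + |t| ^ ((1 : ℝ) / 2)) ^ ((5 : ℝ) / 2)) := by
  have hm : (0 : ℝ) ≤ n := n.cast_nonneg
  set K := 8 * (2 ^ ((5 : ℝ) / 2) * 2 ^ ((n : ℝ) + 1 / 2)) / ((n : ℝ) + 1 / 2)
  refine ⟨2 * 4 ^ ((n : ℝ) + 3 / 2) + K, by positivity, fun A B hA hB hBA z t => ?_⟩
  set σ := |t| ^ ((1 : ℝ) / 2)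
  have hσ : 0 ≤ σ := by positivity
  have hσt : σ ^ 2 = |t| := by
    rw [← rpow_natCast, ← rpow_mul (abs_nonneg t)]; norm_num
  have hP : 0 < (A + ‖z‖) ^ (2 * (n : ℝ) + 1 / 2) * (A + σ) ^ ((5 : ℝ) / 2) := by positivity
  rw [mul_assoc, rpow_half_div_mul_rpow_half_div hA.le]
  rcases le_or_gt σ A with hσA | hAσ
  · calc _ ≤ 2 * (A / (A ^ 2 + ‖z‖ ^ 2) ^ ((n : ℝ) + 3 / 2)) :=
          integral_decay_mul_decay_le t hA.le hB (by positivity) (by linarith)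
      _ ≤ 2 * (4 ^ ((n : ℝ) + 3 / 2) * (A / _)) := by
          gcongr
          exact div_le_mul_div_of_le_mul hA.le hP (by positivity)
            (add_rpow_mul_add_rpow_le hA.le (norm_nonneg z) hσ hm (by nlinarith))
      _ ≤ _ := by
          rw [← mul_assoc]
          gcongr
          exact le_add_of_nonneg_right (by positivity)
  · calc _ ≤ _ := integral_decay_mul_decay_le_split t hA.le hB (by positivity) (by linarith)
      _ ≤ 2 * (4 ^ ((n : ℝ) + 3 / 2) * (A / _)) + K * (A / _) := by
          rw [← hσt]
          refine add_le_add ?_ (far_term_le hA hB hBA (norm_nonneg z) hAσ.le hm)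
          gcongr
          exact div_le_mul_div_of_le_mul hA.le hP (by positivity)
            (add_rpow_mul_add_rpow_le hA.le (norm_nonneg z) hσ hm (by nlinarith))
      _ = _ := by ring

theorem stmt14 (n : ℕ) (hn : 1 ≤ n) :
    ∃ C : ℝ, 0 < C ∧
      ∀ A B : ℝ, 0 < A → 0 < B → B ≤ A ^ 2 →
        ∀ (z : EuclideanSpace ℝ (Fin (2 * n))) (t : ℝ),
          (∫ u : ℝ,
              (A / (A ^ 2 + ‖z‖ ^ 2 + |t - u|) ^ ((n : ℝ) + 3 / 2)) *
                (B / (B + |u|) ^ 2)) ≤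
            C * (A ^ ((1 : ℝ) / 2) / (A + ‖z‖) ^ (2 * (n : ℝ) + 1 / 2)) *
              (A ^ ((1 : ℝ) / 2) / (A + |t| ^ ((1 : ℝ) / 2)) ^ ((5 : ℝ) / 2)) :=
  stmt14_general n
end
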